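/- Let x₀, x_D ∈ ℝ³ with x₀ ≠ x_D, let n₀ ∈ ℝ³ be a unit vector with s₀ := ⟪n₀, x₀ − x_D⟫ ≠ 0, set ρ₀ := ‖x₀ − x_D‖, let β ∈ ℝ, and define f(x) = (ρ₀²/s₀)·(1 − ρ₀/‖x − x_D‖). Let σ be the surface measure on the unit sphere S² ⊂ ℝ³ induced by Lebesgue measure (so that σ(S²) = 4π), and let H := {ω ∈ S² : ω₃ < 0} denote the open lower hemisphere. Then lim_{a → ∞} a² · ∫_{ω ∈ H} β·⟪∇f(a·ω), ω⟫ / ‖a·ω − x₀‖ dσ(ω) = 0. -/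

import Mathlib

open scoped RealInnerProductSpace
open Filter MeasureTheory Metric Real

/-!
For large `a` the gradient of `f` at `a • ω` has size `O(a⁻²)` and `‖a • ω - x₀‖⁻¹ = O(a⁻¹)`,
uniformly in `ω` on the unit sphere. The integrand is therefore `O(a⁻³)`, and since `σ` is a
finite measure, `a²` times the integral is `O(a⁻¹)`.
-/

section Potential

variable {E : Type*} [NormedAddCommGroup E] [InnerProductSpace ℝ E]

theorem hasFDerivAt_norm_of_ne_zero {x : E} (hx : x ≠ 0) :
    HasFDerivAt (‖·‖) (‖x‖⁻¹ • innerSL ℝ x) x := by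
  have h := ((hasStrictFDerivAt_norm_sq x).hasFDerivAt).sqrt (by positivity)
  simp only [sqrt_sq (norm_nonneg _)] at h
  convert h using 1
  ext y
  simp only [smul_apply, coe_innerSL_apply, smul_eq_mul, nsmul_eq_mul,
    Nat.cast_ofNat]
  field_simp

theorem hasFDerivAt_const_mul_one_sub_div_norm_sub (c ρ : ℝ) {p x : E} (hx : x ≠ p) :
    HasFDerivAt (fun y => c * (1 - ρ / ‖y - p‖))
      ((c * ρ / ‖x - p‖ ^ 3) • innerSL ℝ (x - p)) x := by
  have hxp : x - p ≠ 0 := sub_ne_zero.2 hx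
  have h := (hasDerivAt_inv (norm_ne_zero_iff.2 hxp)).comp_hasFDerivAt x
    ((hasFDerivAt_norm_of_ne_zero hxp).comp x ((hasFDerivAt_id x).sub_const p))
  have hf : (fun y => c * (1 - ρ / ‖y - p‖)) = fun y => c - c * ρ * ‖y - p‖⁻¹ := by
    funext y; ring
  rw [hf]
  refine ((h.const_mul (c * ρ)).const_sub c).congr_fderiv ?_
  ext y
  simp only [ContinuousLinearMap.comp_id, neg_smul, smul_neg, neg_neg,
    smul_apply, coe_innerSL_apply, smul_eq_mul]
  field_simp

theorem abs_inner_gradient_const_mul_one_sub_div_norm_sub_le [CompleteSpace E] (c ρ : ℝ)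
    {p x : E} (hx : x ≠ p) (ω : E) :
    |⟪gradient (fun y => c * (1 - ρ / ‖y - p‖)) x, ω⟫| ≤ |c * ρ| * ‖ω‖ / ‖x - p‖ ^ 2 := by
  have hxp : 0 < ‖x - p‖ := norm_pos_iff.2 (sub_ne_zero.2 hx)
  rw [inner_gradient_left, (hasFDerivAt_const_mul_one_sub_div_norm_sub c ρ hx).fderiv]
  calc |(c * ρ / ‖x - p‖ ^ 3) * ⟪x - p, ω⟫|
      ≤ |c * ρ| / ‖x - p‖ ^ 3 * (‖x - p‖ * ‖ω‖) := by
        rw [abs_mul, abs_div, abs_of_pos (pow_pos hxp 3)]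
        gcongr
        exact abs_real_inner_le_norm _ _
    _ = |c * ρ| * ‖ω‖ / ‖x - p‖ ^ 2 := by field_simp

theorem half_le_norm_smul_sub {a : ℝ} {ω p : E} (ha : 0 ≤ a) (hω : ‖ω‖ = 1)
    (hp : ‖p‖ ≤ a / 2) : a / 2 ≤ ‖a • ω - p‖ := by
  have h := norm_sub_norm_le (a • ω) p
  rw [norm_smul, hω, mul_one, norm_of_nonneg ha] at h
  linarith

theorem norm_mul_inner_gradient_div_le [CompleteSpace E] (β c ρ : ℝ) {p q ω : E} {a : ℝ}
    (ha : 0 < a) (hω : ‖ω‖ = 1) (hp : ‖p‖ ≤ a / 2) (hq : ‖q‖ ≤ a / 2) :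
    ‖β * ⟪gradient (fun y => c * (1 - ρ / ‖y - p‖)) (a • ω), ω⟫ / ‖a • ω - q‖‖
      ≤ 8 * |β| * |c * ρ| / a ^ 3 := by
  have hp' := half_le_norm_smul_sub ha.le hω hp
  have hq' := half_le_norm_smul_sub ha.le hω hq
  have hne : a • ω ≠ p := fun h => by rw [h, sub_self, norm_zero] at hp'; linarith
  have hinner := abs_inner_gradient_const_mul_one_sub_div_norm_sub_le c ρ hne ω
  rw [hω, mul_one] at hinner
  rw [norm_div, norm_mul, norm_norm, norm_eq_abs, norm_eq_abs]
  calc |β| * |⟪gradient (fun y => c * (1 - ρ / ‖y - p‖)) (a • ω), ω⟫| / ‖a • ω - q‖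
      ≤ |β| * (|c * ρ| / (a / 2) ^ 2) / (a / 2) := by
        gcongr
        exact hinner.trans (by gcongr)
    _ = 8 * |β| * |c * ρ| / a ^ 3 := by field_simp; ring

end Potential

theorem tendsto_sq_mul_setIntegral_of_norm_le_div_cube {α : Type*} [MeasurableSpace α]
    {μ : Measure α} {s : Set α} (hs : μ s < ⊤) (g : ℝ → α → ℝ) (C : ℝ)
    (hg : ∀ᶠ a in atTop, ∀ ω ∈ s, ‖g a ω‖ ≤ C / a ^ 3) :
    Tendsto (fun a => a ^ 2 * ∫ ω in s, g a ω ∂μ) atTop (nhds 0) := by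
  refine squeeze_zero_norm' ?_ (tendsto_const_nhds (x := C * μ.real s) |>.div_atTop tendsto_id)
  filter_upwards [hg, eventually_gt_atTop 0] with a hga ha
  calc ‖a ^ 2 * ∫ ω in s, g a ω ∂μ‖ = a ^ 2 * ‖∫ ω in s, g a ω ∂μ‖ := by
        rw [norm_mul, norm_of_nonneg (by positivity)]
    _ ≤ a ^ 2 * (C / a ^ 3 * μ.real s) := by
        gcongr
        exact norm_setIntegral_le_of_norm_le_const hs hga
    _ = C * μ.real s / a := by field_simp

theorem stmt13_general (x₀ xD : EuclideanSpace ℝ (Fin 3))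
    (s₀ ρ₀ β : ℝ)
    (f : EuclideanSpace ℝ (Fin 3) → ℝ)
    (hf : f = fun x => (ρ₀ ^ 2 / s₀) * (1 - ρ₀ / ‖x - xD‖))
    (σ : Measure (sphere (0 : EuclideanSpace ℝ (Fin 3)) 1))
    (hσ : σ = (volume : Measure (EuclideanSpace ℝ (Fin 3))).toSphere)
    (H : Set (sphere (0 : EuclideanSpace ℝ (Fin 3)) 1)) :
    Tendsto
      (fun a : ℝ => a ^ 2 *
        ∫ ω in H, β * ⟪gradient f (a • (ω : EuclideanSpace ℝ (Fin 3))),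
            (ω : EuclideanSpace ℝ (Fin 3))⟫ /
          ‖a • (ω : EuclideanSpace ℝ (Fin 3)) - x₀‖ ∂σ)
      atTop (nhds 0) := by
  subst hf hσ
  refine tendsto_sq_mul_setIntegral_of_norm_le_div_cube (measure_lt_top _ H) _
    (8 * |β| * |ρ₀ ^ 2 / s₀ * ρ₀|) ?_
  filter_upwards [eventually_ge_atTop (2 * ‖x₀‖), eventually_ge_atTop (2 * ‖xD‖),
    eventually_gt_atTop 0] with a hx₀ hxD ha ω _
  exact norm_mul_inner_gradient_div_le β _ ρ₀ ha (mem_sphere_zero_iff_norm.1 ω.2)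
    (by linarith) (by linarith)

theorem stmt13 (x₀ xD n₀ : EuclideanSpace ℝ (Fin 3)) (hx : x₀ ≠ xD) (hn₀ : ‖n₀‖ = 1)
    (s₀ ρ₀ β : ℝ) (hs₀def : s₀ = ⟪n₀, x₀ - xD⟫) (hs₀ : s₀ ≠ 0) (hρ₀ : ρ₀ = ‖x₀ - xD‖)
    (f : EuclideanSpace ℝ (Fin 3) → ℝ)
    (hf : f = fun x => (ρ₀ ^ 2 / s₀) * (1 - ρ₀ / ‖x - xD‖))
    (σ : Measure (sphere (0 : EuclideanSpace ℝ (Fin 3)) 1))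
    (hσ : σ = (volume : Measure (EuclideanSpace ℝ (Fin 3))).toSphere)
    (H : Set (sphere (0 : EuclideanSpace ℝ (Fin 3)) 1))
    (hH : H = {ω | (ω : EuclideanSpace ℝ (Fin 3)) 2 < 0}) :
    Tendsto
      (fun a : ℝ => a ^ 2 *
        ∫ ω in H, β * ⟪gradient f (a • (ω : EuclideanSpace ℝ (Fin 3))),
            (ω : EuclideanSpace ℝ (Fin 3))⟫ /
          ‖a • (ω : EuclideanSpace ℝ (Fin 3)) - x₀‖ ∂σ)
      atTop (nhds 0) :=
  stmt13_general x₀ xD s₀ ρ₀ β f hf σ hσ H
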